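/- Let A be a C*-algebra and let a, b be positive elements of A. If a ≾ b (Cuntz subequivalence), then d_τ(a) ≤ d_τ(b) for every lower semicontinuous tracial weight τ on A; consequently, if a ≈ b then d_τ(a) = d_τ(b) for every such τ. -/

import Mathlib

open Filter Topology

noncomputable section

variable {A : Type*}

/-- The hereditary subalgebra `A_a`: the norm-closure of `{a * x * a : x ∈ A}`. -/
def herSub [NonUnitalCStarAlgebra A] (a : A) : Set A :=
  closure {y : A | ∃ x : A, y = a * x * a}

/-- The right ideal `E_a`: the norm-closure of `{a * x : x ∈ A}`. -/
def rightIdeal [NonUnitalCStarAlgebra A] (a : A) : Set A :=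
  closure {y : A | ∃ x : A, y = a * x}

/-- Pedersen equivalence: `a = x* x` and `b = x x*` for some `x`. -/
def PedersenEquiv [NonUnitalCStarAlgebra A] (a b : A) : Prop :=
  ∃ x : A, a = star x * x ∧ b = x * star x

/-- Blackadar equivalence `a ∼ₛ b`: there is `x ∈ A` with `A_a = A_{x*x}` and `A_b = A_{xx*}`. -/
def BlackadarEquiv [NonUnitalCStarAlgebra A] (a b : A) : Prop :=
  ∃ x : A, herSub a = herSub (star x * x) ∧ herSub b = herSub (x * star x)

/-- Blackadar subequivalence `a ≾ₛ b`: there is a positive `a' ∈ A_b` with `a ∼ₛ a'`. -/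
def BlackadarLe [NonUnitalCStarAlgebra A] [PartialOrder A] (a b : A) : Prop :=
  ∃ a' : A, 0 ≤ a' ∧ a' ∈ herSub b ∧ BlackadarEquiv a a'

/-- Cuntz subequivalence `a ≾ b`: there is a sequence `xₙ` with `‖xₙ* b xₙ - a‖ → 0`. -/
def CuntzLe [NonUnitalCStarAlgebra A] (a b : A) : Prop :=
  ∃ x : ℕ → A, Tendsto (fun n => ‖star (x n) * b * x n - a‖) atTop (𝓝 0)

/-- Cuntz equivalence `a ≈ b`. -/
def CuntzEquiv [NonUnitalCStarAlgebra A] (a b : A) : Prop :=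
  CuntzLe a b ∧ CuntzLe b a

/-- Compact containment `a ⊂⊂ b`: there is a positive `e ∈ A_b` with `e * a = a`. -/
def CpctContained [NonUnitalCStarAlgebra A] [PartialOrder A] (a b : A) : Prop :=
  ∃ e : A, 0 ≤ e ∧ e ∈ herSub b ∧ e * a = a

open scoped ENNReal

variable [NonUnitalCStarAlgebra A] [PartialOrder A] [StarOrderedRing A]

/-- A lower semicontinuous tracial weight on a C*-algebra `A`: an additive, positively
homogeneous, tracial `[0, ∞]`-valued function on the positive cone which is lower
semicontinuous with respect to the norm topology on the positive cone. -/
structure IsTracialWeight (τ : A → ℝ≥0∞) : Prop where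
  additive : ∀ a b : A, 0 ≤ a → 0 ≤ b → τ (a + b) = τ a + τ b
  homogeneous : ∀ a : A, 0 ≤ a → ∀ r : ℝ, 0 ≤ r → τ (r • a) = ENNReal.ofReal r * τ a
  tracial : ∀ x : A, τ (star x * x) = τ (x * star x)
  lowerSemicontinuous : LowerSemicontinuousOn τ {a : A | 0 ≤ a}

/-- The function `f_ε`: `0` at `0`, equal to `1` on `[ε, ∞)`, and linear on `[0, ε]`. -/
def fEps (ε : ℝ) : ℝ → ℝ := fun t => min (t / ε) 1

/-- The dimension function `d_τ(a) = sup_{ε > 0} τ(f_ε(a))` associated to a tracial weight. -/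
def dimFn (τ : A → ℝ≥0∞) (a : A) : ℝ≥0∞ :=
  ⨆ (ε : ℝ) (_ : 0 < ε), τ (cfcₙ (fEps ε) a)

/-! Write `d = d_τ(b)`. First, `τ(y* b y) ≤ ‖y* b y‖ d` for every `y`: by traciality
`τ(y* b y) = τ(w)` with `w = b^½ y y* b^½`, and `w` is the norm limit, as `δ → 0`, of
`f_δ(b) w f_δ(b)`, whose trace is at most `‖w‖ τ(f_δ(b)²) ≤ ‖w‖ d`; lower semicontinuity carries
the bound to the limit. Now let `x_n* b x_n → a` and `ε > 0`. Functional calculus gives `g` with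
`(1 - g) a (1 - g) = ε f_ε(a)` (take `1 - g = (ε / max(t, ε))^½`), so `y_n = x_n (1 - g)` satisfies
`y_n* b y_n → ε f_ε(a)`, and lower semicontinuity once more gives
`ε τ(f_ε(a)) ≤ ε ‖f_ε(a)‖ d ≤ ε d`. -/

theorem LowerSemicontinuousWithinAt.le_of_tendsto {α ι γ : Type*} [TopologicalSpace α]
    [LinearOrder γ] [DenselyOrdered γ] [TopologicalSpace γ] [OrderClosedTopology γ]
    {f : α → γ} {s : Set α} {x : α} (hf : LowerSemicontinuousWithinAt f s x)
    {l : Filter ι} [l.NeBot] {v : ι → α} (hv : Tendsto v l (𝓝[s] x))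
    {F : ι → γ} {c : γ} (hF : Tendsto F l (𝓝 c)) (hle : ∀ᶠ i in l, f (v i) ≤ F i) :
    f x ≤ c :=
  le_of_forall_lt_imp_le_of_dense fun r hr =>
    ge_of_tendsto hF <| (hv.eventually (hf r hr)).mp <| hle.mono fun _ h h' => (h'.trans_le h).le

theorem continuous_fEps (ε : ℝ) : Continuous (fEps ε) := by
  unfold fEps; fun_prop

@[simp]
theorem fEps_zero (ε : ℝ) : fEps ε 0 = 0 := by
  simp [fEps]

theorem fEps_nonneg {ε t : ℝ} (hε : 0 ≤ ε) (ht : 0 ≤ t) : 0 ≤ fEps ε t :=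
  le_min (div_nonneg ht hε) zero_le_one

theorem fEps_le_one (ε t : ℝ) : fEps ε t ≤ 1 :=
  min_le_right _ _

theorem fEps_of_le {ε t : ℝ} (hε : 0 < ε) (h : ε ≤ t) : fEps ε t = 1 :=
  min_eq_right ((one_le_div hε).2 h)

theorem fEps_mul_self_le {ε t : ℝ} (hε : 0 ≤ ε) (ht : 0 ≤ t) : fEps ε t * fEps ε t ≤ fEps ε t :=
  mul_le_of_le_one_left (fEps_nonneg hε ht) (fEps_le_one ε t)

theorem mul_fEps_eq_div_max {ε t : ℝ} (hε : 0 < ε) :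
    ε * fEps ε t = ε / max t ε * t := by
  rcases le_total t ε with h | h
  · rw [max_eq_right h, fEps, min_eq_left ((div_le_one hε).2 h)]
    field_simp
  · rw [max_eq_left h, fEps_of_le hε h]
    field_simp [(hε.trans_le h).ne']

theorem abs_fEps_mul_sqrt_sub_sqrt_le {δ t : ℝ} (hδ : 0 < δ) (ht : 0 ≤ t) :
    |fEps δ t * √t - √t| ≤ √δ := by
  rcases le_total δ t with h | h
  · simp [fEps_of_le hδ h]
  · rw [abs_sub_comm, abs_of_nonneg (by nlinarith [fEps_le_one δ t, Real.sqrt_nonneg t])]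
    nlinarith [fEps_nonneg hδ.le ht, Real.sqrt_nonneg t, Real.sqrt_le_sqrt h]

theorem tendsto_cfcₙ_fEps_mul_sqrt {b : A} (hb : 0 ≤ b) :
    Tendsto (fun δ => cfcₙ (fEps δ) b * CFC.sqrt b) (𝓝[>] 0) (𝓝 (CFC.sqrt b)) := by
  have hσ := quasispectrum_nonneg_of_nonneg (𝕜 := ℝ) b hb
  rw [tendsto_iff_norm_sub_tendsto_zero]
  have hsqrt : Tendsto (fun δ : ℝ => √δ) (𝓝[>] 0) (𝓝 0) := by
    simpa using (Real.continuous_sqrt.tendsto 0).mono_left nhdsWithin_le_nhds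
  refine squeeze_zero' (Eventually.of_forall fun _ => norm_nonneg _) ?_ hsqrt
  filter_upwards [self_mem_nhdsWithin] with δ (hδ : 0 < δ)
  have hf := continuous_fEps δ
  rw [CFC.sqrt_eq_real_sqrt b, ← cfcₙ_mul (fEps δ) Real.sqrt b, ← cfcₙ_sub ..]
  exact norm_cfcₙ_le fun t ht => abs_fEps_mul_sqrt_sub_sqrt_le hδ (hσ t ht)

theorem star_cfcₙ_fEps_mul_self_le {b : A} (hb : 0 ≤ b) {δ : ℝ} (hδ : 0 ≤ δ) :
    star (cfcₙ (fEps δ) b) * cfcₙ (fEps δ) b ≤ cfcₙ (fEps δ) b := by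
  have hf := continuous_fEps δ
  rw [(cfcₙ_predicate (fEps δ) b).star_eq, ← cfcₙ_mul ..]
  exact cfcₙ_mono fun t ht =>
    fEps_mul_self_le hδ (quasispectrum_nonneg_of_nonneg (𝕜 := ℝ) b hb t ht)

theorem cfcₙ_one_sub_sq_mul_self {B : Type*} [NonUnitalCStarAlgebra B] {q : ℝ → ℝ}
    (hq : Continuous q) (hq0 : q 0 = 0) {a : B} (ha : IsSelfAdjoint a) :
    cfcₙ (fun t => (1 - q t) ^ 2 * t) a =
      a - cfcₙ q a * a - a * cfcₙ q a + cfcₙ q a * a * cfcₙ q a := by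
  rw [show (fun t => (1 - q t) ^ 2 * t) = fun t => t - q t * t - t * q t + q t * t * q t by
      ext; ring]
  rw [cfcₙ_add .., cfcₙ_sub .., cfcₙ_sub .., cfcₙ_mul (fun t => q t * t) q a,
    cfcₙ_mul q (fun t => t) a, cfcₙ_mul (fun t => t) q a, cfcₙ_id' ..]

-- `a - g a - a g + g a g` is `(1 - g) a (1 - g)`, written out because `A` need not be unital.
theorem exists_compression_eq_smul_cfcₙ_fEps {a : A} (ha : 0 ≤ a) {ε : ℝ} (hε : 0 < ε) :
    ∃ g : A, IsSelfAdjoint g ∧ a - g * a - a * g + g * a * g = ε • cfcₙ (fEps ε) a := by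
  have hmax : ∀ t, max t ε ≠ 0 := fun t => (hε.trans_le (le_max_right t ε)).ne'
  have hq : Continuous fun t => 1 - √(ε / max t ε) :=
    continuous_const.sub <| Real.continuous_sqrt.comp <|
      continuous_const.div (continuous_id.max continuous_const) hmax
  have hq0 : 1 - √(ε / max 0 ε) = 0 := by simp [max_eq_right hε.le, hε.ne']
  refine ⟨_, cfcₙ_predicate _ a, (cfcₙ_one_sub_sq_mul_self hq hq0 (.of_nonneg ha)).symm.trans ?_⟩
  have hf := continuous_fEps ε
  rw [← cfcₙ_smul ..]
  refine cfcₙ_congr fun t _ => ?_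
  rw [sub_sub_cancel, Real.sq_sqrt (div_nonneg hε.le (le_max_of_le_right hε.le)), smul_eq_mul,
    mul_fEps_eq_div_max hε]

namespace IsTracialWeight

variable {τ : A → ℝ≥0∞}

theorem mono (hτ : IsTracialWeight τ) {u v : A} (hu : 0 ≤ u) (huv : u ≤ v) : τ u ≤ τ v := by
  rw [← add_sub_cancel u v, hτ.additive u (v - u) hu (sub_nonneg.2 huv)]
  exact le_self_add

theorem apply_star_mul_mul_le_norm_mul (hτ : IsTracialWeight τ) {u : A} (hu : 0 ≤ u) (c : A) :
    τ (star c * u * c) ≤ ENNReal.ofReal ‖u‖ * τ (star c * c) :=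
  (hτ.mono (star_left_conjugate_nonneg hu c)
    (CStarAlgebra.star_left_conjugate_le_norm_smul (.of_nonneg hu))).trans_eq
    (hτ.homogeneous _ (star_mul_self_nonneg c) _ (norm_nonneg u))

theorem apply_star_cfcₙ_fEps_mul_self_le_dimFn (hτ : IsTracialWeight τ) {b : A} (hb : 0 ≤ b)
    {δ : ℝ} (hδ : 0 < δ) : τ (star (cfcₙ (fEps δ) b) * cfcₙ (fEps δ) b) ≤ dimFn τ b :=
  (hτ.mono (star_mul_self_nonneg _) (star_cfcₙ_fEps_mul_self_le hb hδ.le)).trans <|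
    le_iSup₂ (f := fun δ (_ : 0 < δ) => τ (cfcₙ (fEps δ) b)) δ hδ

theorem apply_star_mul_mul_le_norm_mul_dimFn (hτ : IsTracialWeight τ) {b : A} (hb : 0 ≤ b)
    (y : A) : τ (star y * b * y) ≤ ENNReal.ofReal ‖star y * b * y‖ * dimFn τ b := by
  have hs : star (CFC.sqrt b) = CFC.sqrt b :=
    (IsSelfAdjoint.of_nonneg (CFC.sqrt_nonneg b)).star_eq
  have he : ∀ δ, star (cfcₙ (fEps δ) b) = cfcₙ (fEps δ) b := fun δ =>
    (cfcₙ_predicate (fEps δ) b).star_eq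
  have hyb : star y * b * y = star (CFC.sqrt b * y) * (CFC.sqrt b * y) := by
    conv_lhs => rw [← CFC.sqrt_mul_sqrt_self b hb]
    simp only [star_mul, hs, mul_assoc]
  rw [hyb, hτ.tracial, CStarRing.norm_star_mul_self, ← CStarRing.norm_self_mul_star]
  set w := CFC.sqrt b * y * star (CFC.sqrt b * y)
  have hw : 0 ≤ w := mul_star_self_nonneg _
  have hlim : Tendsto (fun δ => star (cfcₙ (fEps δ) b) * w * cfcₙ (fEps δ) b) (𝓝[>] 0) (𝓝 w) := by
    have hesy := (tendsto_cfcₙ_fEps_mul_sqrt hb).mul_const y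
    refine (hesy.mul hesy.star).congr fun δ => ?_
    simp only [w, star_mul, hs, he, mul_assoc]
  refine LowerSemicontinuousWithinAt.le_of_tendsto (hτ.lowerSemicontinuous w hw)
    (tendsto_nhdsWithin_iff.2 ⟨hlim, .of_forall fun δ => star_left_conjugate_nonneg hw _⟩)
    tendsto_const_nhds ?_
  filter_upwards [self_mem_nhdsWithin] with δ (hδ : 0 < δ)
  exact (hτ.apply_star_mul_mul_le_norm_mul hw _).trans <|
    mul_le_mul_right (hτ.apply_star_cfcₙ_fEps_mul_self_le_dimFn hb hδ) _

theorem apply_cfcₙ_fEps_le_dimFn_of_cuntzLe (hτ : IsTracialWeight τ) {a b : A} (ha : 0 ≤ a)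
    (hb : 0 ≤ b) (hab : CuntzLe a b) (hd : dimFn τ b ≠ ⊤) {ε : ℝ} (hε : 0 < ε) :
    τ (cfcₙ (fEps ε) a) ≤ dimFn τ b := by
  obtain ⟨x, hx⟩ := hab
  obtain ⟨g, hg, hga⟩ := exists_compression_eq_smul_cfcₙ_fEps ha hε
  set L := cfcₙ (fEps ε) a
  have hσ := quasispectrum_nonneg_of_nonneg (𝕜 := ℝ) a ha
  have hL : 0 ≤ L := cfcₙ_nonneg fun t ht => fEps_nonneg hε.le (hσ t ht)
  have hLnorm : ‖L‖ ≤ 1 := norm_cfcₙ_le fun t ht => by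
    rw [Real.norm_of_nonneg (fEps_nonneg hε.le (hσ t ht))]
    exact fEps_le_one ε t
  set v := fun n => star (x n - x n * g) * b * (x n - x n * g)
  have hv : Tendsto v atTop (𝓝 (ε • L)) := by
    have hcomp : Continuous fun w : A => w - g * w - w * g + g * w * g := by fun_prop
    rw [← hga]
    refine ((hcomp.tendsto a).comp (tendsto_iff_norm_sub_tendsto_zero.2 hx)).congr fun n => ?_
    simp only [v, Function.comp, star_sub, star_mul, hg.star_eq]
    noncomm_ring
  have hεL : τ (ε • L) ≤ ENNReal.ofReal ‖ε • L‖ * dimFn τ b :=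
    LowerSemicontinuousWithinAt.le_of_tendsto (hτ.lowerSemicontinuous _ (smul_nonneg hε.le hL))
      (tendsto_nhdsWithin_iff.2 ⟨hv, .of_forall fun n => star_left_conjugate_nonneg hb _⟩)
      (ENNReal.Tendsto.mul_const (ENNReal.tendsto_ofReal hv.norm) (.inr hd))
      (.of_forall fun n => hτ.apply_star_mul_mul_le_norm_mul_dimFn hb _)
  rw [hτ.homogeneous L hL ε hε.le, norm_smul, Real.norm_of_nonneg hε.le,
    ENNReal.ofReal_mul hε.le, mul_assoc] at hεL
  refine (ENNReal.mul_le_mul_iff_right (by simpa using hε) ENNReal.ofReal_ne_top).1 ?_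
  calc ENNReal.ofReal ε * τ L ≤ ENNReal.ofReal ε * (ENNReal.ofReal ‖L‖ * dimFn τ b) := hεL
    _ ≤ ENNReal.ofReal ε * dimFn τ b := by
      gcongr
      exact mul_le_of_le_one_left zero_le (ENNReal.ofReal_le_one.2 hLnorm)

theorem dimFn_le_of_cuntzLe (hτ : IsTracialWeight τ) {a b : A} (ha : 0 ≤ a) (hb : 0 ≤ b)
    (hab : CuntzLe a b) : dimFn τ a ≤ dimFn τ b := by
  rcases eq_or_ne (dimFn τ b) ⊤ with hd | hd
  · exact hd ▸ le_top
  · exact iSup₂_le fun ε hε => hτ.apply_cfcₙ_fEps_le_dimFn_of_cuntzLe ha hb hab hd hε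

end IsTracialWeight

/-- Cuntz subequivalence implies `d_τ(a) ≤ d_τ(b)` for every lower
semicontinuous tracial weight `τ`; consequently Cuntz equivalence implies
`d_τ(a) = d_τ(b)`. -/
theorem cuntzLe_implies_dimFn_le (a b : A) (ha : 0 ≤ a) (hb : 0 ≤ b) :
    (CuntzLe a b → ∀ τ : A → ℝ≥0∞, IsTracialWeight τ → dimFn τ a ≤ dimFn τ b) ∧
    (CuntzEquiv a b → ∀ τ : A → ℝ≥0∞, IsTracialWeight τ → dimFn τ a = dimFn τ b) :=
  ⟨fun hab _ hτ => hτ.dimFn_le_of_cuntzLe ha hb hab,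
    fun hab _ hτ =>
      (hτ.dimFn_le_of_cuntzLe ha hb hab.1).antisymm (hτ.dimFn_le_of_cuntzLe hb ha hab.2)⟩
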